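/- A linear functional λ on Π(ℝ^d) satisfies λ(p) = 0 for all p of degree ≤ k if and only if (λ⊗λ)(‖x−y‖^(2r)) = 0 for all integers r with 0 ≤ r ≤ k. -/

import Mathlib

open MvPolynomial Finset

noncomputable section

/-- The multi-index on the first (`x`) block of variables of a monomial in `Fin d ⊕ Fin d`. -/
def xpart {d : ℕ} (m : (Fin d ⊕ Fin d) →₀ ℕ) : Fin d →₀ ℕ :=
  Finsupp.equivFunOnFinite.symm fun i => m (Sum.inl i)

/-- The multi-index on the second (`y`) block of variables. -/
def ypart {d : ℕ} (m : (Fin d ⊕ Fin d) →₀ ℕ) : Fin d →₀ ℕ :=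
  Finsupp.equivFunOnFinite.symm fun i => m (Sum.inr i)

/-- `(l ⊗ m) f`: apply `l` in the `x`-variables and `m` in the `y`-variables of a
two-block polynomial `f`, via its canonical representation as a sum of products
of monomials in `x` and monomials in `y`. -/
def tensorApply {d : ℕ} (l m : Module.Dual ℝ (MvPolynomial (Fin d) ℝ))
    (f : MvPolynomial (Fin d ⊕ Fin d) ℝ) : ℝ :=
  ∑ mo ∈ f.support, f.coeff mo * l (monomial (xpart mo) 1) * m (monomial (ypart mo) 1)

/-- Apply the linear functional `l` in the second (`y`) block of variables,
yielding a polynomial in the first (`x`) block of variables. -/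
def applySecond {d : ℕ} (l : Module.Dual ℝ (MvPolynomial (Fin d) ℝ))
    (f : MvPolynomial (Fin d ⊕ Fin d) ℝ) : MvPolynomial (Fin d) ℝ :=
  ∑ mo ∈ f.support, monomial (xpart mo) (f.coeff mo * l (monomial (ypart mo) 1))

/-- The polynomial `(x,y) ↦ ‖x-y‖^(2k)` in the `2d` variables `x(1),…,x(d),y(1),…,y(d)`. -/
def distPoly (d k : ℕ) : MvPolynomial (Fin d ⊕ Fin d) ℝ :=
  (∑ i : Fin d, (X (Sum.inl i) - X (Sum.inr i)) ^ 2) ^ k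

/-- `l` vanishes on all polynomials of total degree `< k` (i.e. `l ⊥ Π_{<k}`). -/
def VanishesLT {d : ℕ} (l : Module.Dual ℝ (MvPolynomial (Fin d) ℝ)) (k : ℕ) : Prop :=
  ∀ p : MvPolynomial (Fin d) ℝ, p.totalDegree < k → l p = 0

/-- `l` vanishes on all polynomials of total degree `≤ k` (i.e. `l ⊥ Π_{≤k}`). -/
def VanishesLE {d : ℕ} (l : Module.Dual ℝ (MvPolynomial (Fin d) ℝ)) (k : ℕ) : Prop :=
  ∀ p : MvPolynomial (Fin d) ℝ, p.totalDegree ≤ k → l p = 0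

/-- `p_{a,β} : x ↦ ‖x‖^(2a) x^β` as a polynomial. -/
def pPoly (d : ℕ) (a : ℕ) (β : Fin d →₀ ℕ) : MvPolynomial (Fin d) ℝ :=
  (∑ i : Fin d, X i ^ 2) ^ a * monomial β 1

/-! Write `‖x-y‖² = ‖x‖² + ‖y‖² - 2⟨x,y⟩`. Then `‖x-y‖^(2r)` is a combination of the polynomials
`‖x‖^(2a) ‖y‖^(2c) ⟨x,y⟩^b` with `2a + b + 2c + b = 2r`, and
`⟨x,y⟩^b = ∑_{|β| = b} (b choose β) x^β y^β`.
If `λ ⊥ Π_{<r}`, then `λ ⊗ λ` kills every such term with `a ≠ c`, since one of its factors has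
degree `< r`. A term with `a = c` contributes `(-1)^r` times a positive multiple of
`∑_{|β| = b} (b choose β) λ(‖x‖^(2a) x^β)²`. Hence `(λ ⊗ λ)‖x-y‖^(2r) = 0` forces `λ(x^β) = 0` for
`|β| = r`, and induction on `r` gives `λ ⊥ Π_{≤k}`. Conversely, every monomial of `‖x-y‖^(2r)` has
`x`-degree or `y`-degree at most `r`. -/

section TensorApply

variable {d : ℕ} (l m : Module.Dual ℝ (MvPolynomial (Fin d) ℝ))

lemma tensorApply_eq_sum (f : MvPolynomial (Fin d ⊕ Fin d) ℝ) :
    tensorApply l m f = (AddMonoidAlgebra.coeff f).sum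
      fun mo c => c * l (monomial (xpart mo) 1) * m (monomial (ypart mo) 1) :=
  rfl

lemma tensorApply_add (f g : MvPolynomial (Fin d ⊕ Fin d) ℝ) :
    tensorApply l m (f + g) = tensorApply l m f + tensorApply l m g := by
  simp only [tensorApply_eq_sum]
  exact Finsupp.sum_add_index' (by simp) (by intros; ring)

lemma tensorApply_smul (c : ℝ) (f : MvPolynomial (Fin d ⊕ Fin d) ℝ) :
    tensorApply l m (c • f) = c * tensorApply l m f := by
  simp only [tensorApply_eq_sum]
  rw [AddMonoidAlgebra.coeff_smul, Finsupp.sum_smul_index' (by simp), Finsupp.mul_sum]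
  simp only [smul_eq_mul, mul_assoc]

def tensorApplyₗ : MvPolynomial (Fin d ⊕ Fin d) ℝ →ₗ[ℝ] ℝ where
  toFun := tensorApply l m
  map_add' := tensorApply_add l m
  map_smul' := tensorApply_smul l m

lemma tensorApply_monomial (mo : (Fin d ⊕ Fin d) →₀ ℕ) (c : ℝ) :
    tensorApply l m (monomial mo c) =
      c * l (monomial (xpart mo) 1) * m (monomial (ypart mo) 1) := by
  simp [tensorApply_eq_sum]

lemma xpart_mapDomain_add (α β : Fin d →₀ ℕ) :
    xpart (α.mapDomain Sum.inl + β.mapDomain Sum.inr) = α := by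
  ext i
  simp [xpart, Finsupp.mapDomain_apply Sum.inl_injective, Finsupp.mapDomain_of_notMem_range]

lemma ypart_mapDomain_add (α β : Fin d →₀ ℕ) :
    ypart (α.mapDomain Sum.inl + β.mapDomain Sum.inr) = β := by
  ext i
  simp [ypart, Finsupp.mapDomain_apply Sum.inr_injective, Finsupp.mapDomain_of_notMem_range]

lemma tensorApply_rename_mul_rename (p q : MvPolynomial (Fin d) ℝ) :
    tensorApply l m (rename Sum.inl p * rename Sum.inr q) = l p * m q := by
  induction p using MvPolynomial.induction_on' with
  | add p p' hp hp' => rw [map_add, add_mul, tensorApply_add, hp, hp', map_add, add_mul]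
  | monomial α a =>
    induction q using MvPolynomial.induction_on' with
    | add q q' hq hq' => rw [map_add, mul_add, tensorApply_add, hq, hq', map_add, mul_add]
    | monomial β b =>
      have apply_monomial (f : Module.Dual ℝ (MvPolynomial (Fin d) ℝ)) (γ : Fin d →₀ ℕ) (c : ℝ) :
          f (monomial γ c) = c * f (monomial γ 1) := by
        rw [← smul_eq_mul, ← map_smul, smul_monomial, smul_eq_mul, mul_one]
      rw [rename_monomial, rename_monomial, monomial_mul, tensorApply_monomial,
        xpart_mapDomain_add, ypart_mapDomain_add, apply_monomial l α a, apply_monomial m β b]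
      ring

lemma degree_xpart_add_degree_ypart (mo : (Fin d ⊕ Fin d) →₀ ℕ) :
    (xpart mo).degree + (ypart mo).degree = mo.degree := by
  simp [Finsupp.degree_eq_sum, xpart, ypart, Fintype.sum_sum_type]

end TensorApply

section Polynomials

variable (d : ℕ)

def sqNormPoly : MvPolynomial (Fin d) ℝ := ∑ i : Fin d, X i ^ 2

lemma pPoly_eq_sqNormPoly_pow_mul (a : ℕ) (β : Fin d →₀ ℕ) :
    pPoly d a β = sqNormPoly d ^ a * monomial β 1 :=
  rfl

def innerPoly : MvPolynomial (Fin d ⊕ Fin d) ℝ := ∑ i : Fin d, X (Sum.inl i) * X (Sum.inr i)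

def normInnerPoly (a c b : ℕ) : MvPolynomial (Fin d ⊕ Fin d) ℝ :=
  rename Sum.inl (sqNormPoly d) ^ a * rename Sum.inr (sqNormPoly d) ^ c * innerPoly d ^ b

lemma sum_sub_sq_eq :
    ∑ i : Fin d, (X (Sum.inl i) - X (Sum.inr i) : MvPolynomial (Fin d ⊕ Fin d) ℝ) ^ 2
      = (-2 : ℝ) • innerPoly d +
        (rename Sum.inl (sqNormPoly d) + rename Sum.inr (sqNormPoly d)) := by
  simp only [innerPoly, sqNormPoly, map_sum, map_pow, rename_X, smul_sum, ← sum_add_distrib,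
    smul_eq_C_mul]
  refine sum_congr rfl fun i _ => ?_
  simp only [map_neg, map_ofNat]
  ring

def distPolyCoeff (r b a : ℕ) : ℝ := r.choose b * (r - b).choose a * (-2) ^ b

lemma distPoly_eq_sum (r : ℕ) :
    distPoly d r = ∑ b ∈ range (r + 1), ∑ a ∈ range (r - b + 1),
      distPolyCoeff r b a • normInnerPoly d a (r - b - a) b := by
  rw [distPoly, sum_sub_sq_eq, add_pow]
  refine sum_congr rfl fun b _ => ?_
  rw [add_pow, mul_sum, sum_mul]
  refine sum_congr rfl fun a _ => ?_
  simp only [distPolyCoeff, normInnerPoly, smul_eq_C_mul, ← map_natCast (C : ℝ →+* _), map_mul,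
    map_pow]
  ring

lemma isHomogeneous_distPoly (r : ℕ) : (distPoly d r).IsHomogeneous (2 * r) := by
  have h : (∑ i : Fin d, (X (Sum.inl i) - X (Sum.inr i) : MvPolynomial (Fin d ⊕ Fin d) ℝ) ^ 2
      ).IsHomogeneous 2 :=
    IsHomogeneous.sum _ _ _ fun i _ =>
      by simpa using ((isHomogeneous_X ℝ (Sum.inl i)).sub (isHomogeneous_X ℝ (Sum.inr i))).pow 2
  simpa [distPoly, mul_comm] using h.pow r

lemma prod_X_pow_eq_monomial_equivFunOnFinite (k : Fin d → ℕ) :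
    ∏ i, (X i : MvPolynomial (Fin d) ℝ) ^ k i = monomial (Finsupp.equivFunOnFinite.symm k) 1 := by
  rw [monomial_eq, C_1, one_mul, Finsupp.prod_fintype _ _ (fun _ => pow_zero _)]
  rfl

lemma innerPoly_pow (b : ℕ) :
    innerPoly d ^ b = ∑ k ∈ piAntidiag univ b, (Nat.multinomial univ k : MvPolynomial _ ℝ) *
      (rename Sum.inl (monomial (Finsupp.equivFunOnFinite.symm k) 1) *
        rename Sum.inr (monomial (Finsupp.equivFunOnFinite.symm k) 1)) := by
  rw [innerPoly, sum_pow_eq_sum_piAntidiag]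
  refine sum_congr rfl fun k _ => ?_
  rw [← prod_X_pow_eq_monomial_equivFunOnFinite, map_prod, map_prod, ← prod_mul_distrib]
  simp only [map_pow, rename_X, mul_pow]

end Polynomials

lemma tensorApply_normInnerPoly {d : ℕ} (l m : Module.Dual ℝ (MvPolynomial (Fin d) ℝ))
    (a c b : ℕ) :
    tensorApply l m (normInnerPoly d a c b) = ∑ k ∈ piAntidiag univ b,
      (Nat.multinomial univ k : ℝ) * (l (pPoly d a (Finsupp.equivFunOnFinite.symm k)) *
        m (pPoly d c (Finsupp.equivFunOnFinite.symm k))) := by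
  change tensorApplyₗ l m _ = _
  rw [normInnerPoly, innerPoly_pow, mul_sum, map_sum]
  refine sum_congr rfl fun k _ => ?_
  rw [mul_left_comm, ← nsmul_eq_mul, map_nsmul, nsmul_eq_mul, pPoly_eq_sqNormPoly_pow_mul,
    pPoly_eq_sqNormPoly_pow_mul, ← tensorApply_rename_mul_rename l m]
  congr 1
  refine congrArg (tensorApply l m) ?_
  simp only [map_mul, map_pow]
  ring

section Vanishing

variable {d : ℕ} {l m : Module.Dual ℝ (MvPolynomial (Fin d) ℝ)} {k r : ℕ}

lemma totalDegree_monomial_le_degree (β : Fin d →₀ ℕ) (c : ℝ) :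
    (monomial β c).totalDegree ≤ β.degree :=
  totalDegree_monomial_le β c

lemma totalDegree_pPoly_le (a : ℕ) (β : Fin d →₀ ℕ) :
    (pPoly d a β).totalDegree ≤ 2 * a + β.degree := by
  have hS : (sqNormPoly d).totalDegree ≤ 2 :=
    totalDegree_finsetSum_le fun i _ => (totalDegree_X_pow i 2).le
  calc (pPoly d a β).totalDegree ≤ a * (sqNormPoly d).totalDegree + β.degree :=
        (totalDegree_mul _ _).trans
          (add_le_add (totalDegree_pow _ _) (totalDegree_monomial_le_degree β 1))
    _ ≤ 2 * a + β.degree := by nlinarith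

lemma vanishesLE_of_monomial (h : ∀ β : Fin d →₀ ℕ, β.degree ≤ k → l (monomial β 1) = 0) :
    VanishesLE l k := by
  intro p hp
  rw [p.as_sum, map_sum]
  refine sum_eq_zero fun β hβ => ?_
  rw [← mul_one (coeff β p), ← smul_eq_mul, ← smul_monomial, map_smul,
    h β ((le_totalDegree hβ).trans hp), smul_zero]

lemma VanishesLE.mono (h : VanishesLE l k) (hr : r ≤ k) : VanishesLE l r :=
  fun p hp => h p (hp.trans hr)

lemma vanishesLT_succ_iff : VanishesLT l (r + 1) ↔ VanishesLE l r := by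
  simp only [VanishesLT, VanishesLE, Nat.lt_succ_iff]

lemma VanishesLT.pPoly_eq_zero (h : VanishesLT l r) {a : ℕ} {β : Fin d →₀ ℕ}
    (hβ : 2 * a + β.degree < r) : l (pPoly d a β) = 0 :=
  h _ ((totalDegree_pPoly_le a β).trans_lt hβ)

lemma tensorApply_eq_zero_of_isHomogeneous {f : MvPolynomial (Fin d ⊕ Fin d) ℝ}
    (hf : f.IsHomogeneous (2 * r)) (hl : VanishesLE l r) (hm : VanishesLE m r) :
    tensorApply l m f = 0 := by
  refine sum_eq_zero fun mo hmo => ?_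
  have hdeg : (xpart mo).degree + (ypart mo).degree = 2 * r := by
    rw [degree_xpart_add_degree_ypart, Finsupp.degree_eq_weight_one]
    exact hf (mem_support_iff.mp hmo)
  rcases le_total (xpart mo).degree r with hx | hx
  · rw [hl _ ((totalDegree_monomial_le_degree _ 1).trans hx), mul_zero, zero_mul]
  · rw [hm _ ((totalDegree_monomial_le_degree _ 1).trans (by omega)), mul_zero]

end Vanishing

section DistPoly

variable {d : ℕ} {l m : Module.Dual ℝ (MvPolynomial (Fin d) ℝ)} {r : ℕ}

lemma degree_equivFunOnFinite_symm_of_mem_piAntidiag {b : ℕ} {k : Fin d → ℕ}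
    (hk : k ∈ piAntidiag univ b) : (Finsupp.equivFunOnFinite.symm k).degree = b := by
  rw [Finsupp.degree_eq_sum, ← (mem_piAntidiag.mp hk).1]
  rfl

lemma tensorApply_normInnerPoly_eq_zero_of_vanishesLT (hl : VanishesLT l r)
    (hm : VanishesLT m r) {a c b : ℕ} (h : 2 * a + b < r ∨ 2 * c + b < r) :
    tensorApply l m (normInnerPoly d a c b) = 0 := by
  rw [tensorApply_normInnerPoly]
  refine sum_eq_zero fun k hk => ?_
  have hdeg := degree_equivFunOnFinite_symm_of_mem_piAntidiag hk
  rcases h with h | h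
  · rw [hl.pPoly_eq_zero (by omega), zero_mul, mul_zero]
  · rw [hm.pPoly_eq_zero (by omega), mul_zero, mul_zero]

lemma tensorApply_normInnerPoly_self_nonneg (l : Module.Dual ℝ (MvPolynomial (Fin d) ℝ))
    (a b : ℕ) : 0 ≤ tensorApply l l (normInnerPoly d a a b) := by
  rw [tensorApply_normInnerPoly]
  exact sum_nonneg fun k _ => mul_nonneg (Nat.cast_nonneg _) (mul_self_nonneg _)

lemma pPoly_eq_zero_of_tensorApply_normInnerPoly_self_eq_zero {a b : ℕ}
    (h : tensorApply l l (normInnerPoly d a a b) = 0) {β : Fin d →₀ ℕ} (hβ : β.degree = b) :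
    l (pPoly d a β) = 0 := by
  rw [tensorApply_normInnerPoly] at h
  have hβ_mem : ⇑β ∈ piAntidiag univ b := by
    simp [← hβ, Finsupp.degree_eq_sum]
  have hterm := (sum_eq_zero_iff_of_nonneg fun k _ =>
    mul_nonneg (Nat.cast_nonneg _) (mul_self_nonneg _)).mp h _ hβ_mem
  rw [Finsupp.equivFunOnFinite_symm_coe, mul_eq_zero, mul_self_eq_zero] at hterm
  exact hterm.resolve_left (Nat.cast_ne_zero.mpr (Nat.multinomial_pos _ _).ne')

lemma tensorApply_distPoly (l m : Module.Dual ℝ (MvPolynomial (Fin d) ℝ)) (r : ℕ) :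
    tensorApply l m (distPoly d r) = ∑ b ∈ range (r + 1), ∑ a ∈ range (r - b + 1),
      distPolyCoeff r b a * tensorApply l m (normInnerPoly d a (r - b - a) b) := by
  change tensorApplyₗ l m _ = _
  simp only [distPoly_eq_sum, map_sum, map_smul, smul_eq_mul]
  rfl

lemma neg_one_pow_mul_distPolyCoeff_mul_tensorApply_nonneg (hl : VanishesLT l r) {a b : ℕ}
    (hb : b ≤ r) (ha : a ≤ r - b) :
    0 ≤ (-1) ^ r * (distPolyCoeff r b a * tensorApply l l (normInnerPoly d a (r - b - a) b)) := by
  by_cases hdiag : 2 * a + b = r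
  · have hc : r - b - a = a := by omega
    have hsign : (-1 : ℝ) ^ r * (-2) ^ b = 2 ^ b := by
      rw [← hdiag, pow_add, pow_mul, neg_one_sq, one_pow, one_mul, ← mul_pow]
      norm_num
    calc (0 : ℝ)
        ≤ r.choose b * (r - b).choose a * 2 ^ b * tensorApply l l (normInnerPoly d a a b) :=
          mul_nonneg (by positivity) (tensorApply_normInnerPoly_self_nonneg l a b)
      _ = _ := by rw [hc, ← hsign, distPolyCoeff]; ring
  · rw [tensorApply_normInnerPoly_eq_zero_of_vanishesLT hl hl (by omega), mul_zero, mul_zero]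

lemma vanishesLE_of_vanishesLT_of_tensorApply_distPoly_eq_zero (hl : VanishesLT l r)
    (h : tensorApply l l (distPoly d r) = 0) : VanishesLE l r := by
  set T : ℕ → ℕ → ℝ := fun b a =>
    (-1) ^ r * (distPolyCoeff r b a * tensorApply l l (normInnerPoly d a (r - b - a) b))
  have hT_nonneg : ∀ b ∈ range (r + 1), ∀ a ∈ range (r - b + 1), 0 ≤ T b a :=
    fun b hb a ha => neg_one_pow_mul_distPolyCoeff_mul_tensorApply_nonneg hl
      (Nat.lt_succ_iff.mp (mem_range.mp hb)) (Nat.lt_succ_iff.mp (mem_range.mp ha))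
  have hT_sum : ∑ b ∈ range (r + 1), ∑ a ∈ range (r - b + 1), T b a = 0 := by
    simp only [T, ← mul_sum, ← tensorApply_distPoly, h, mul_zero]
  have hT_top : T r 0 = 0 := by
    have hrow := (sum_eq_zero_iff_of_nonneg fun b hb => sum_nonneg (hT_nonneg b hb)).mp hT_sum
      r (self_mem_range_succ r)
    exact (sum_eq_zero_iff_of_nonneg (hT_nonneg r (self_mem_range_succ r))).mp hrow 0
      (by simp)
  have htop : tensorApply l l (normInnerPoly d 0 0 r) = 0 := by
    simpa [T, distPolyCoeff] using hT_top
  refine vanishesLE_of_monomial fun β hβ => ?_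
  rcases hβ.lt_or_eq with hβ | hβ
  · exact hl _ ((totalDegree_monomial_le_degree β 1).trans_lt hβ)
  · simpa [pPoly] using pPoly_eq_zero_of_tensorApply_normInnerPoly_self_eq_zero htop hβ

end DistPoly

/-- `λ ⊥ Π_{≤k}` iff `(λ⊗λ)‖x−y‖^(2r) = 0` for all `0 ≤ r ≤ k`. -/
theorem vanishesLE_iff_tensor_sq_dist_eq_zero (d k : ℕ)
    (l : Module.Dual ℝ (MvPolynomial (Fin d) ℝ)) :
    VanishesLE l k ↔ ∀ r : ℕ, r ≤ k → tensorApply l l (distPoly d r) = 0 := by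
  refine ⟨fun h r hr => ?_, fun h => ?_⟩
  · exact tensorApply_eq_zero_of_isHomogeneous (isHomogeneous_distPoly d r) (h.mono hr) (h.mono hr)
  · suffices ∀ r ≤ k + 1, VanishesLT l r from vanishesLT_succ_iff.mp (this _ le_rfl)
    intro r
    induction r with
    | zero => exact fun _ p hp => absurd hp (Nat.not_lt_zero _)
    | succ r ih =>
      exact fun hr => vanishesLT_succ_iff.mpr <|
        vanishesLE_of_vanishesLT_of_tensorApply_distPoly_eq_zero (ih (by omega)) (h r (by omega))
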